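/- Assume the first-moment condition ∑_{n≥0} (n+1)(|a_n - 1/2| + |b_n|) < ∞, and let ε ∈ {1, -1}. Then there exists a solution f = (f_n)_{n≥-1} of the Jacobi equation at spectral parameter z = ε such that f_n ε^{-n} → 1 as n → ∞ (i.e. f_n = εⁿ + o(1)). -/

import Mathlib

/-!
Writing `f_n = εⁿ G_{n-N}`, the Jacobi equation at the edge `z = ε` for `n > N` becomes
`G_k - 2 G_{k+1} + G_{k+2} = -(V G)_k` with a perturbation `V` whose coefficients have finite
first moment. Inverting the second difference by `x ↦ ∑_{i ≥ 0} (i + 1) x_{k+i}` gives the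
discrete Volterra equation `G = 1 - ∑_{i ≥ 0} (i + 1) (V G)_{k+i}`; once `N` is so large that the
first moment of the shifted coefficients is below `1`, this is a contraction on bounded
sequences, and its fixed point tends to `1`. Below `N` the solution is continued by running the
recursion backwards, which is possible because `a_{n-1} ≠ 0`.
-/

open Filter Finset MeasureTheory

noncomputable section

/-- Extended coefficient sequence with `a₋₁ = 1/2`. -/
def aext (a : ℕ → ℝ) : ℤ → ℝ := fun k => if k < 0 then 1/2 else a k.toNat

/-- `u : ℤ → ℂ` (restricted to indices `n ≥ -1`) solves the Jacobi equation
`a_{n-1} u_{n-1} + b_n u_n + a_n u_{n+1} = z u_n` for all `n ≥ 0`, with `a_{-1} = 1/2`. -/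
def IsJacobiSol (a b : ℕ → ℝ) (z : ℂ) (u : ℤ → ℂ) : Prop :=
  ∀ n : ℕ, (aext a ((n : ℤ) - 1) : ℂ) * u ((n : ℤ) - 1) + (b n : ℂ) * u (n : ℤ)
      + (a n : ℂ) * u ((n : ℤ) + 1) = z * u (n : ℤ)

/-- The perturbation `V = H - H₀` applied to a sequence:
`(Vf)_m = (a_{m-1} - 1/2) f_{m-1} + b_m f_m + (a_m - 1/2) f_{m+1}` with `a_{-1} = 1/2`. -/
def jV (a b : ℕ → ℝ) (f : ℤ → ℂ) (m : ℕ) : ℂ :=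
  ((aext a ((m : ℤ) - 1) - 1/2 : ℝ) : ℂ) * f ((m : ℤ) - 1) + (b m : ℂ) * f (m : ℤ)
    + ((a m - 1/2 : ℝ) : ℂ) * f ((m : ℤ) + 1)

open Topology

section Moment

variable {h : ℕ → ℝ}

theorem moment_shift_le (h0 : ∀ m, 0 ≤ h m) (i k : ℕ) :
    ((i : ℝ) + 1) * h (i + k) ≤ (((i + k : ℕ) : ℝ) + 1) * h (i + k) := by
  gcongr
  · exact h0 _
  · exact_mod_cast Nat.le_add_right i k

theorem summable_moment_shift (h0 : ∀ m, 0 ≤ h m)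
    (hm : Summable fun m : ℕ => ((m : ℝ) + 1) * h m) (k : ℕ) :
    Summable fun i : ℕ => ((i : ℝ) + 1) * h (i + k) :=
  Summable.of_nonneg_of_le (fun i => mul_nonneg (by positivity) (h0 _)) (moment_shift_le h0 · k)
    ((summable_nat_add_iff k).2 hm)

theorem tsum_moment_shift_le (h0 : ∀ m, 0 ≤ h m)
    (hm : Summable fun m : ℕ => ((m : ℝ) + 1) * h m) (k : ℕ) :
    ∑' i : ℕ, ((i : ℝ) + 1) * h (i + k) ≤ ∑' m : ℕ, ((m : ℝ) + 1) * h m :=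
  Summable.tsum_le_tsum_of_inj (· + k) (add_left_injective k)
    (fun m _ => mul_nonneg (by positivity) (h0 m)) (moment_shift_le h0 · k)
    (summable_moment_shift h0 hm k) hm

theorem tendsto_tsum_moment_shift (h0 : ∀ m, 0 ≤ h m)
    (hm : Summable fun m : ℕ => ((m : ℝ) + 1) * h m) :
    Tendsto (fun k : ℕ => ∑' i : ℕ, ((i : ℝ) + 1) * h (i + k)) atTop (𝓝 0) :=
  squeeze_zero (fun k => tsum_nonneg fun i => mul_nonneg (by positivity) (h0 _))
    (fun k => Summable.tsum_le_tsum (moment_shift_le h0 · k) (summable_moment_shift h0 hm k)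
      ((summable_nat_add_iff k).2 hm))
    (tendsto_sum_nat_add fun m : ℕ => ((m : ℝ) + 1) * h m)

theorem summable_moment_add_succ (h0 : ∀ m, 0 ≤ h m)
    (hm : Summable fun m : ℕ => ((m : ℝ) + 1) * h m) :
    Summable fun m : ℕ => ((m : ℝ) + 1) * (h m + h (m + 1)) := by
  simp only [mul_add]
  exact hm.add (summable_moment_shift h0 hm 1)

end Moment

section DoubleTail

variable {E : Type*} [NormedAddCommGroup E]

/-- A right inverse of the second difference `x_k - 2 x_{k+1} + x_{k+2}`:
`doubleTail x k = ∑_{j ≥ k} ∑_{l ≥ j} x_l`. -/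
def doubleTail (x : ℕ → E) (k : ℕ) : E := ∑' i : ℕ, (i + 1) • x (i + k)

variable {x y : ℕ → E} {w : ℕ → ℝ}

theorem summable_norm_nsmul_shift (hx : ∀ j, ‖x j‖ ≤ w j)
    (hw : Summable fun j : ℕ => ((j : ℝ) + 1) * w j) (k : ℕ) :
    Summable fun i : ℕ => ‖(i + 1) • x (i + k)‖ := by
  have hw0 : ∀ j, 0 ≤ w j := fun j => (norm_nonneg _).trans (hx j)
  refine Summable.of_nonneg_of_le (fun _ => norm_nonneg _) (fun i => ?_)
    (summable_moment_shift hw0 hw k)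
  calc ‖(i + 1) • x (i + k)‖ ≤ ((i + 1 : ℕ) : ℝ) * ‖x (i + k)‖ := norm_nsmul_le
    _ ≤ ((i : ℝ) + 1) * w (i + k) := by push_cast; gcongr; exact hx _

theorem summable_shift_of_norm_le_moment [CompleteSpace E] (hx : ∀ j, ‖x j‖ ≤ w j)
    (hw : Summable fun j : ℕ => ((j : ℝ) + 1) * w j) (k : ℕ) :
    Summable fun i : ℕ => x (i + k) := by
  have hw0 : ∀ j, 0 ≤ w j := fun j => (norm_nonneg _).trans (hx j)
  refine Summable.of_norm_bounded (summable_moment_shift hw0 hw k) fun i => ?_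
  exact (hx _).trans (le_mul_of_one_le_left (hw0 _) (by simp))

theorem norm_doubleTail_le_tsum_shift (hx : ∀ j, ‖x j‖ ≤ w j)
    (hw : Summable fun j : ℕ => ((j : ℝ) + 1) * w j) (k : ℕ) :
    ‖doubleTail x k‖ ≤ ∑' i : ℕ, ((i : ℝ) + 1) * w (i + k) := by
  have hw0 : ∀ j, 0 ≤ w j := fun j => (norm_nonneg _).trans (hx j)
  refine (norm_tsum_le_tsum_norm (summable_norm_nsmul_shift hx hw k)).trans
    (Summable.tsum_le_tsum (fun i => ?_) (summable_norm_nsmul_shift hx hw k)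
      (summable_moment_shift hw0 hw k))
  calc ‖(i + 1) • x (i + k)‖ ≤ ((i + 1 : ℕ) : ℝ) * ‖x (i + k)‖ := norm_nsmul_le
    _ ≤ ((i : ℝ) + 1) * w (i + k) := by push_cast; gcongr; exact hx _

theorem norm_doubleTail_le (hx : ∀ j, ‖x j‖ ≤ w j)
    (hw : Summable fun j : ℕ => ((j : ℝ) + 1) * w j) (k : ℕ) :
    ‖doubleTail x k‖ ≤ ∑' j : ℕ, ((j : ℝ) + 1) * w j :=
  (norm_doubleTail_le_tsum_shift hx hw k).trans
    (tsum_moment_shift_le (fun j => (norm_nonneg _).trans (hx j)) hw k)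

theorem tendsto_doubleTail (hx : ∀ j, ‖x j‖ ≤ w j)
    (hw : Summable fun j : ℕ => ((j : ℝ) + 1) * w j) :
    Tendsto (doubleTail x) atTop (𝓝 0) :=
  squeeze_zero_norm (norm_doubleTail_le_tsum_shift hx hw)
    (tendsto_tsum_moment_shift (fun j => (norm_nonneg _).trans (hx j)) hw)

theorem doubleTail_sub [CompleteSpace E] {v : ℕ → ℝ} (hx : ∀ j, ‖x j‖ ≤ w j)
    (hy : ∀ j, ‖y j‖ ≤ v j)
    (hw : Summable fun j : ℕ => ((j : ℝ) + 1) * w j)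
    (hv : Summable fun j : ℕ => ((j : ℝ) + 1) * v j) (k : ℕ) :
    doubleTail x k - doubleTail y k = doubleTail (x - y) k := by
  simp only [doubleTail, Pi.sub_apply, nsmul_sub]
  exact ((summable_norm_nsmul_shift hx hw k).of_norm.tsum_sub
    (summable_norm_nsmul_shift hy hv k).of_norm).symm

theorem doubleTail_eq_add [CompleteSpace E] (hx : ∀ j, ‖x j‖ ≤ w j)
    (hw : Summable fun j : ℕ => ((j : ℝ) + 1) * w j) (k : ℕ) :
    doubleTail x k = x k + doubleTail x (k + 1) + ∑' i : ℕ, x (i + (k + 1)) := by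
  have hshift : ∀ i : ℕ, (i + 1 + 1) • x (i + 1 + k)
      = (i + 1) • x (i + (k + 1)) + x (i + (k + 1)) := fun i => by
    rw [succ_nsmul, show i + 1 + k = i + (k + 1) by omega]
  rw [doubleTail, (summable_norm_nsmul_shift hx hw k).of_norm.tsum_eq_zero_add, tsum_congr hshift,
    (summable_norm_nsmul_shift hx hw (k + 1)).of_norm.tsum_add
      (summable_shift_of_norm_le_moment hx hw (k + 1))]
  simp only [zero_add, one_nsmul, doubleTail, add_assoc]

theorem tsum_shift_eq_add_tsum_shift_succ [CompleteSpace E] (hx : ∀ j, ‖x j‖ ≤ w j)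
    (hw : Summable fun j : ℕ => ((j : ℝ) + 1) * w j) (k : ℕ) :
    ∑' i : ℕ, x (i + k) = x k + ∑' i : ℕ, x (i + (k + 1)) := by
  rw [(summable_shift_of_norm_le_moment hx hw k).tsum_eq_zero_add, zero_add]
  simp only [Nat.add_right_comm _ 1 k, add_assoc]

theorem doubleTail_second_difference [CompleteSpace E] (hx : ∀ j, ‖x j‖ ≤ w j)
    (hw : Summable fun j : ℕ => ((j : ℝ) + 1) * w j) (k : ℕ) :
    doubleTail x k - 2 • doubleTail x (k + 1) + doubleTail x (k + 2) = x k := by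
  rw [doubleTail_eq_add hx hw k, doubleTail_eq_add hx hw (k + 1),
    tsum_shift_eq_add_tsum_shift_succ hx hw (k + 1)]
  abel

end DoubleTail

section Volterra

variable {E : Type*} [NormedAddCommGroup E] [CompleteSpace E]

open scoped NNReal in
theorem exists_bounded_fixedPoint (Φ : (ℕ → E) → ℕ → E) (K : ℝ≥0) (hK : K < 1)
    (hbdd : ∀ G M, (∀ n, ‖G n‖ ≤ M) → ∃ M', ∀ n, ‖Φ G n‖ ≤ M')
    (hlip : ∀ G G', (∃ M, ∀ n, ‖G n‖ ≤ M) → (∃ M, ∀ n, ‖G' n‖ ≤ M) →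
      ∀ D, (∀ n, ‖G n - G' n‖ ≤ D) → ∀ n, ‖Φ G n - Φ G' n‖ ≤ K * D) :
    ∃ G, (∃ M, ∀ n, ‖G n‖ ≤ M) ∧ Φ G = G := by
  choose B hB using fun G : BoundedContinuousFunction ℕ E => hbdd G ‖G‖ G.norm_coe_le_norm
  let T : BoundedContinuousFunction ℕ E → BoundedContinuousFunction ℕ E := fun G =>
    .ofNormedAddCommGroupDiscrete (Φ G) (B G) (hB G)
  have hT : ContractingWith K T := by
    refine ⟨hK, LipschitzWith.of_dist_le_mul fun G G' => ?_⟩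
    refine (BoundedContinuousFunction.dist_le (by positivity)).2 fun n => ?_
    have hdist : ∀ m, ‖G m - G' m‖ ≤ dist G G' := fun m =>
      (dist_eq_norm _ _).symm.trans_le (BoundedContinuousFunction.dist_coe_le_dist m)
    rw [dist_eq_norm]
    exact hlip G G' ⟨_, G.norm_coe_le_norm⟩ ⟨_, G'.norm_coe_le_norm⟩ _ hdist n
  let G₀ := ContractingWith.fixedPoint T hT
  exact ⟨G₀, ⟨_, G₀.norm_coe_le_norm⟩, funext fun n => congrArg (· n) hT.fixedPoint_isFixedPt⟩

theorem exists_tendsto_of_second_difference_eq (V : (ℕ → E) →+ (ℕ → E)) (w : ℕ → ℝ)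
    (hV : ∀ G M, (∀ m, ‖G m‖ ≤ M) → ∀ j, ‖V G j‖ ≤ w j * M)
    (hw : Summable fun j : ℕ => ((j : ℝ) + 1) * w j)
    (hsmall : ∑' j : ℕ, ((j : ℝ) + 1) * w j < 1) (v : E) :
    ∃ G : ℕ → E, (∀ k, G k - 2 • G (k + 1) + G (k + 2) = -V G k) ∧
      Tendsto G atTop (𝓝 v) := by
  set C := ∑' j : ℕ, ((j : ℝ) + 1) * w j
  have hw0 : ∀ j, 0 ≤ w j := fun j => by
    simpa using (norm_nonneg _).trans (hV 0 1 (fun _ => by simp) j)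
  have hC0 : 0 ≤ C := tsum_nonneg fun j => mul_nonneg (by positivity) (hw0 j)
  have hwM : ∀ M, Summable fun j : ℕ => ((j : ℝ) + 1) * (w j * M) := fun M => by
    simpa only [mul_assoc] using hw.mul_right M
  have hCM : ∀ M, ∑' j : ℕ, ((j : ℝ) + 1) * (w j * M) = C * M := fun M => by
    simp only [← mul_assoc, tsum_mul_right, C]
  obtain ⟨G, ⟨M, hM⟩, hfix⟩ := exists_bounded_fixedPoint
    (fun G k => v - doubleTail (V G) k) C.toNNReal (by simpa using hsmall)
    (fun G M hG => ⟨‖v‖ + C * M, fun n => (norm_sub_le _ _).trans (by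
      grw [norm_doubleTail_le (hV G M hG) (hwM M), hCM]) ⟩)
    (fun G G' ⟨M, hG⟩ ⟨M', hG'⟩ D hD n => by
      have hGG' : ∀ m, ‖(G' - G) m‖ ≤ D := fun m => by rw [Pi.sub_apply, norm_sub_rev]; exact hD m
      rw [sub_sub_sub_cancel_left, doubleTail_sub (hV G' M' hG') (hV G M hG) (hwM M') (hwM M),
        ← map_sub, Real.coe_toNNReal C hC0, ← hCM]
      exact norm_doubleTail_le (hV _ D hGG') (hwM D) n)
  have hG : ∀ k, G k = v - doubleTail (V G) k := fun k => (congrFun hfix k).symm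
  refine ⟨G, fun k => ?_, ?_⟩
  · rw [hG k, hG (k + 1), hG (k + 2), ← doubleTail_second_difference (hV G M hM) (hwM M) k]
    abel
  · have hlim := (tendsto_const_nhds (x := v)).sub (tendsto_doubleTail (hV G M hM) (hwM M))
    rw [sub_zero] at hlim
    exact hlim.congr fun k => (hG k).symm

end Volterra

section Jacobi

variable (a b : ℕ → ℝ)

def JacobiEqAt (z : ℂ) (u : ℤ → ℂ) (n : ℕ) : Prop :=
  (aext a ((n : ℤ) - 1) : ℂ) * u ((n : ℤ) - 1) + (b n : ℂ) * u (n : ℤ)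
    + (a n : ℂ) * u ((n : ℤ) + 1) = z * u (n : ℤ)

/-- Writing `f_n = εⁿ G_{n-N}`, the Jacobi equation at `z = ε` for `n > N` becomes
`G_k - 2 G_{k+1} + G_{k+2} = -(edgePerturbation a b ε N G)_k`, where `k = n - N - 1`. -/
def edgePerturbation (ε : ℝ) (N : ℕ) : (ℕ → ℂ) →+ (ℕ → ℂ) :=
  AddMonoidHom.mk' (fun G j => 2 * (((a (j + N) - 1/2 : ℝ) : ℂ) * G j
      + ((ε * b (j + N + 1) : ℝ) : ℂ) * G (j + 1) + ((a (j + N + 1) - 1/2 : ℝ) : ℂ) * G (j + 2)))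
    fun G G' => by funext j; simp only [Pi.add_apply]; ring

variable {a b}

theorem aext_natCast (n : ℕ) : aext a n = a n := by
  simp [aext]

theorem aext_ne_zero (ha : ∀ n, a n ≠ 0) (k : ℤ) : aext a k ≠ 0 := by
  unfold aext
  split_ifs
  · norm_num
  · exact ha _

theorem jacobiEqAt_update_of_lt {z : ℂ} {u : ℤ → ℂ} {n : ℕ} {m : ℤ} (hm : m < (n : ℤ) - 1)
    (c : ℂ) : JacobiEqAt a b z (Function.update u m c) n ↔ JacobiEqAt a b z u n := by
  simp only [JacobiEqAt, Function.update_of_ne (show (n : ℤ) - 1 ≠ m by omega),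
    Function.update_of_ne (show (n : ℤ) ≠ m by omega),
    Function.update_of_ne (show (n : ℤ) + 1 ≠ m by omega)]

theorem jacobiEqAt_update_pred (ha : ∀ n, a n ≠ 0) (z : ℂ) (u : ℤ → ℂ) (n : ℕ) :
    JacobiEqAt a b z (Function.update u ((n : ℤ) - 1)
      ((z * u n - b n * u n - a n * u (n + 1)) / aext a ((n : ℤ) - 1))) n := by
  have hne : (aext a ((n : ℤ) - 1) : ℂ) ≠ 0 := by exact_mod_cast aext_ne_zero ha _
  simp only [JacobiEqAt, Function.update_self,
    Function.update_of_ne (show (n : ℤ) ≠ n - 1 by omega),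
    Function.update_of_ne (show (n : ℤ) + 1 ≠ n - 1 by omega)]
  field_simp
  ring

theorem exists_isJacobiSol_eq_of_ge (ha : ∀ n, a n ≠ 0) (z : ℂ) (N : ℕ) (g : ℤ → ℂ)
    (hg : ∀ n, N ≤ n → JacobiEqAt a b z g n) :
    ∃ f, IsJacobiSol a b z f ∧ ∀ m : ℤ, (N : ℤ) - 1 ≤ m → f m = g m := by
  induction N generalizing g with
  | zero => exact ⟨g, fun n => hg n n.zero_le, fun _ _ => rfl⟩
  | succ N ih =>
    obtain ⟨f, hf, hfg⟩ := ih (Function.update g ((N : ℤ) - 1)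
        ((z * g N - b N * g N - a N * g (N + 1)) / aext a ((N : ℤ) - 1))) fun n hn => by
      rcases hn.eq_or_lt with rfl | hlt
      · exact jacobiEqAt_update_pred ha z g _
      · exact (jacobiEqAt_update_of_lt (by omega) _).2 (hg n hlt)
    refine ⟨f, hf, fun m hm => ?_⟩
    push_cast at hm
    rw [hfg m (by omega), Function.update_of_ne (by omega)]

theorem norm_edgePerturbation_le {ε : ℝ} (hε : |ε| = 1) (N : ℕ) (G : ℕ → ℂ) (M : ℝ)
    (hG : ∀ m, ‖G m‖ ≤ M) (j : ℕ) :
    ‖edgePerturbation a b ε N G j‖ ≤ (2 * (|a (j + N) - 1/2| + |b (j + N)|)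
      + 2 * (|a (j + N + 1) - 1/2| + |b (j + N + 1)|)) * M := by
  have hM : 0 ≤ M := (norm_nonneg _).trans (hG 0)
  have hterm : ∀ (r : ℝ) (i : ℕ), ‖(r : ℂ) * G i‖ ≤ |r| * M := fun r i => by
    rw [norm_mul, Complex.norm_real, Real.norm_eq_abs]
    exact mul_le_mul_of_nonneg_left (hG i) (abs_nonneg r)
  simp only [edgePerturbation, AddMonoidHom.mk'_apply]
  calc _ ≤ 2 * (|a (j + N) - 1/2| * M + |ε * b (j + N + 1)| * M
        + |a (j + N + 1) - 1/2| * M) := by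
        rw [norm_mul, Complex.norm_ofNat]
        gcongr
        exact norm_add₃_le.trans (add_le_add_three (hterm _ _) (hterm _ _) (hterm _ _))
    _ ≤ _ := by
        rw [abs_mul, hε, one_mul]
        nlinarith [mul_nonneg (abs_nonneg (b (j + N))) hM]

theorem jacobiEqAt_edge {ε : ℝ} (hε : ε * ε = 1) {N : ℕ} {G : ℕ → ℂ}
    (hG : ∀ k, G k - 2 • G (k + 1) + G (k + 2) = -edgePerturbation a b ε N G k) {n : ℕ}
    (hn : N < n) : JacobiEqAt a b ε (fun m => (ε : ℂ) ^ m * G (m - N).toNat) n := by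
  obtain ⟨k, rfl⟩ : ∃ k, n = k + N + 1 := ⟨n - N - 1, by omega⟩
  have hεC : (ε : ℂ) * ε = 1 := by exact_mod_cast hε
  have hε0 : (ε : ℂ) ≠ 0 := left_ne_zero_of_mul_eq_one hεC
  have hpred : ((k + N + 1 : ℕ) : ℤ) - 1 = ((k + N : ℕ) : ℤ) := by push_cast; ring
  have e1 : (((k + N : ℕ) : ℤ) - N).toNat = k := by omega
  have e2 : (((k + N + 1 : ℕ) : ℤ) - N).toNat = k + 1 := by omega
  have e3 : (((k + N + 1 : ℕ) : ℤ) + 1 - N).toNat = k + 2 := by omega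
  have hz1 : (ε : ℂ) ^ ((k + N : ℕ) : ℤ) = (ε : ℂ) ^ ((k + N + 1 : ℕ) : ℤ) * ε := by
    rw [← hpred, zpow_sub_one₀ hε0, inv_eq_of_mul_eq_one_right hεC]
  have hz2 : (ε : ℂ) ^ (((k + N + 1 : ℕ) : ℤ) + 1) = (ε : ℂ) ^ ((k + N + 1 : ℕ) : ℤ) * ε :=
    zpow_add_one₀ hε0 _
  have dq := hG k
  simp only [edgePerturbation, AddMonoidHom.mk'_apply, two_nsmul] at dq
  simp only [JacobiEqAt, hpred, aext_natCast, e1, e2, e3, hz1, hz2]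
  generalize (ε : ℂ) ^ ((k + N + 1 : ℕ) : ℤ) = p
  push_cast at dq ⊢
  linear_combination (p * ε / 2) * dq - ((b (k + N + 1) : ℂ) * p * G (k + 1)) * hεC

end Jacobi

/-- under the first-moment condition the Jost solution exists at the
edge points `z = ±1`, with `f_n = εⁿ + o(1)`. -/
theorem jost_solution_at_edge
    (a b : ℕ → ℝ) (ha : ∀ n, 0 < a n)
    (hm : Summable (fun n : ℕ => ((n : ℝ) + 1) * (|a n - 1/2| + |b n|)))
    (ε : ℝ) (hε : ε = 1 ∨ ε = -1) :
    ∃ f : ℤ → ℂ, IsJacobiSol a b (ε : ℂ) f ∧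
      Filter.Tendsto (fun n : ℕ => f (n : ℤ) * (ε : ℂ) ^ (-(n : ℤ))) Filter.atTop (nhds 1) := by
  have hε2 : ε * ε = 1 := by rcases hε with rfl | rfl <;> norm_num
  have hεabs : |ε| = 1 := by rcases hε with rfl | rfl <;> norm_num
  set h : ℕ → ℝ := fun m => 2 * (|a m - 1/2| + |b m|) + 2 * (|a (m + 1) - 1/2| + |b (m + 1)|)
  have h0 : ∀ m, 0 ≤ h m := fun m => by positivity
  have hmh : Summable fun m : ℕ => ((m : ℝ) + 1) * h m :=
    summable_moment_add_succ (fun m => by positivity)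
      (by simpa only [mul_left_comm] using hm.mul_left 2)
  obtain ⟨N, hN⟩ := ((tendsto_tsum_moment_shift h0 hmh).eventually (gt_mem_nhds one_pos)).exists
  obtain ⟨G, hG, hGlim⟩ := exists_tendsto_of_second_difference_eq (edgePerturbation a b ε N)
    (fun j => h (j + N)) (norm_edgePerturbation_le hεabs N) (summable_moment_shift h0 hmh N) hN 1
  obtain ⟨f, hf, hfg⟩ := exists_isJacobiSol_eq_of_ge (fun n => (ha n).ne') ε (N + 1) _
    fun n hn => jacobiEqAt_edge hε2 hG hn
  refine ⟨f, hf, (hGlim.comp (tendsto_sub_atTop_nat N)).congr' ?_⟩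
  filter_upwards [eventually_ge_atTop N] with n hn
  have hε0 : (ε : ℂ) ≠ 0 := by exact_mod_cast left_ne_zero_of_mul_eq_one hε2
  rw [Function.comp_apply, hfg n (by omega), mul_right_comm, ← zpow_add₀ hε0, add_neg_cancel,
    zpow_zero, one_mul]
  congr
  omega
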